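/- arXiv:math/0412434 — 2 statements merged into one kernel-verified Lean document; each statement's English description precedes it below -/
import Mathlib

section
/- Let $R$ be a commutative ring, $n \ge 1$, $m \ge 2$, and let $A_1, \dots, A_m$ be $n \times n$ matrices over $R$. Let $C(A_1,\dots,A_m)$ denote the $mn \times mn$ block matrix whose $(i,i)$ block is $A_i$, whose $(i,i+1)$ block is $-I_n$ for $1 \le i \le m-1$, whose $(m,1)$ block is $-I_n$, and all of whose other blocks are zero. Then $\det C(A_1,\dots,A_m) = \det(A_m A_{m-1} \cdots A_1 - I_n)$. -/
/-!
Write the block matrix as `diagonal A - S`, where `S` is the cyclic block shift. Multiplying on the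
right by the block unitriangular matrix that adds to block column `0` every block column `j`
weighted by the partial product `A (j-1) * ⋯ * A 0` clears block column `0` except for its last
block, which becomes `A (m-1) * ⋯ * A 0 - 1`. Rotating the block columns by one step then yields a
block lower triangular matrix with diagonal blocks `-1, …, -1, A (m-1) * ⋯ * A 0 - 1`, and the sign
of the rotation cancels the factors `det (-1)`.
-/

open Equiv

namespace List

theorem prod_reverse_take_succ {M : Type*} [Monoid M] (l : List M) {i : ℕ} (hi : i < l.length) :
    (l.take (i + 1)).reverse.prod = l[i] * (l.take i).reverse.prod := by
  rw [take_add_one, getElem?_eq_getElem hi, Option.toList_some, reverse_append,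
    reverse_singleton, singleton_append, prod_cons]

end List

namespace Matrix

section Blocks

variable {S : Type*} {k : ℕ}

def cyclicShift [Zero S] [One S] : Matrix (Fin (k + 1)) (Fin (k + 1)) S :=
  of fun i j => if j = i + 1 then 1 else 0

theorem cyclicShift_mulVec [NonAssocSemiring S] (v : Fin (k + 1) → S) (i : Fin (k + 1)) :
    (cyclicShift *ᵥ v) i = v (i + 1) := by
  simp [cyclicShift, mulVec, dotProduct]

theorem diagonal_sub_cyclicShift_apply [Ring S] (A : Fin (k + 2) → S) (i j : Fin (k + 2)) :
    (diagonal A - cyclicShift : Matrix (Fin (k + 2)) (Fin (k + 2)) S) i j =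
      if j = i then A i else if j = i + 1 then -1 else 0 := by
  by_cases hji : j = i
  · subst hji
    simp [cyclicShift]
  · simp only [sub_apply, diagonal_apply_ne' _ hji, cyclicShift, of_apply, if_neg hji]
    split_ifs <;> simp

theorem isLowerTriangular_one_updateCol_zero [Zero S] [One S] (v : Fin (k + 1) → S) :
    ((1 : Matrix _ _ S).updateCol 0 v).IsLowerTriangular := by
  intro i j (hij : i < j)
  rw [updateCol_ne (Fin.ne_zero_of_lt hij), one_apply_ne hij.ne]

def partialProdRev [Monoid S] (A : Fin (k + 1) → S) (i : Fin (k + 1)) : S :=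
  ((List.ofFn A).take i).reverse.prod

variable [Ring S]

theorem diagonal_sub_cyclicShift_mulVec_partialProdRev (A : Fin (k + 1) → S) :
    (diagonal A - cyclicShift) *ᵥ partialProdRev A =
      Pi.single (Fin.last k) ((List.ofFn A).reverse.prod - 1) := by
  ext i
  have hstep : A i * partialProdRev A i = ((List.ofFn A).take (i + 1)).reverse.prod := by
    rw [List.prod_reverse_take_succ _ (by simp [i.isLt]), List.getElem_ofFn]
    rfl
  rw [sub_mulVec, Pi.sub_apply, mulVec_diagonal, cyclicShift_mulVec, hstep]
  rcases eq_or_ne i (Fin.last k) with rfl | hi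
  · simp [partialProdRev, List.take_of_length_le]
  · rw [Pi.single_eq_of_ne hi, partialProdRev,
      Fin.val_add_one_of_lt (Fin.lt_last_iff_ne_last.2 hi), sub_self]

theorem diagonal_sub_cyclicShift_mul_updateCol (A : Fin (k + 1) → S) :
    (diagonal A - cyclicShift) * (1 : Matrix _ _ S).updateCol 0 (partialProdRev A) =
      (diagonal A - cyclicShift).updateCol 0
        (Pi.single (Fin.last k) ((List.ofFn A).reverse.prod - 1)) := by
  rw [mul_updateCol, mul_one, diagonal_sub_cyclicShift_mulVec_partialProdRev]

theorem isLowerTriangular_updateCol_submatrix_finRotate (A : Fin (k + 1) → S) (c : S) :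
    (((diagonal A - cyclicShift).updateCol 0 (Pi.single (Fin.last k) c)).submatrix id
      (finRotate (k + 1))).IsLowerTriangular := by
  intro i j (hij : i < j)
  have hi : i ≠ Fin.last k := (hij.trans_le (Fin.le_last j)).ne
  rw [submatrix_apply, id, finRotate_apply]
  rcases eq_or_ne j (Fin.last k) with rfl | hj
  · rw [Fin.last_add_one, updateCol_self, Pi.single_eq_of_ne hi]
  · have hj1 : ((j + 1 : Fin (k + 1)) : ℕ) = j + 1 :=
      Fin.val_add_one_of_lt (Fin.lt_last_iff_ne_last.2 hj)
    rw [Fin.lt_def] at hij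
    have hne0 : j + 1 ≠ 0 := Fin.ne_of_val_ne (by rw [hj1]; simp)
    have hne : i ≠ j + 1 := Fin.ne_of_val_ne (by rw [hj1]; omega)
    have hne' : j + 1 ≠ i + 1 := fun h => hij.ne (congrArg Fin.val (add_right_cancel h)).symm
    simp [updateCol_ne hne0, cyclicShift, diagonal_apply_ne _ hne, hne']

theorem updateCol_submatrix_finRotate_apply_self (A : Fin (k + 1) → S) (c : S)
    (i : Fin (k + 1)) :
    ((diagonal A - cyclicShift).updateCol 0 (Pi.single (Fin.last k) c)).submatrix id
      (finRotate (k + 1)) i i = if i = Fin.last k then c else -1 := by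
  rw [submatrix_apply, id, finRotate_apply]
  split_ifs with hi
  · rw [hi, Fin.last_add_one, updateCol_self, Pi.single_eq_same]
  · have hi1 : ((i + 1 : Fin (k + 1)) : ℕ) = i + 1 :=
      Fin.val_add_one_of_lt (Fin.lt_last_iff_ne_last.2 hi)
    have hne0 : i + 1 ≠ 0 := Fin.ne_of_val_ne (by rw [hi1]; simp)
    have hne : i ≠ i + 1 := Fin.ne_of_val_ne (by rw [hi1]; omega)
    simp [updateCol_ne hne0, cyclicShift, diagonal_apply_ne _ hne]

end Blocks

section Det

variable {R ι κ : Type*} [CommRing R] [Fintype ι] [DecidableEq ι] [Fintype κ] [DecidableEq κ]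

theorem det_comp_of_isLowerTriangular [LinearOrder ι] (M : Matrix ι ι (Matrix κ κ R))
    (hM : M.IsLowerTriangular) : (comp ι ι κ κ R M).det = ∏ i, (M i i).det := by
  rw [hM.comp.det_fintype]
  refine Fintype.prod_congr _ _ fun i => ?_
  let : Unique {j // OrderDual.toDual j = i} := ⟨⟨⟨i, rfl⟩⟩, fun j => Subtype.ext j.property⟩
  rw [comp_toSquareBlock, det_reindex_self, ← det_reindex_self (uniqueProd κ _)]
  rfl

theorem det_comp_submatrix_perm (σ : Perm ι) (M : Matrix ι ι (Matrix κ κ R)) :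
    (comp ι ι κ κ R (M.submatrix id σ)).det =
      Perm.sign σ ^ Fintype.card κ * (comp ι ι κ κ R M).det := by
  have h := det_permute' (prodCongrLeft fun _ : κ => σ) (comp ι ι κ κ R M)
  rw [Perm.sign_prodCongrLeft, Finset.prod_const, Finset.card_univ] at h
  exact_mod_cast h

theorem det_comp_diagonal_sub_cyclicShift {n k : ℕ} (A : Fin (k + 1) → Matrix (Fin n) (Fin n) R) :
    (comp _ _ _ _ R (diagonal A - cyclicShift)).det = ((List.ofFn A).reverse.prod - 1).det := by
  set c := (List.ofFn A).reverse.prod - 1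
  have hU : (comp _ _ _ _ R ((1 : Matrix _ _ _).updateCol 0 (partialProdRev A))).det = 1 := by
    rw [det_comp_of_isLowerTriangular _ (isLowerTriangular_one_updateCol_zero _)]
    refine Finset.prod_eq_one fun i _ => ?_
    rcases eq_or_ne i 0 with rfl | hi
    · simp [partialProdRev]
    · rw [updateCol_ne hi, one_apply_eq, det_one]
  have hcleared : (comp _ _ _ _ R (diagonal A - cyclicShift)).det =
      (comp _ _ _ _ R ((diagonal A - cyclicShift).updateCol 0 (Pi.single (Fin.last k) c))).det := by
    rw [← mul_one (det _), ← hU, ← det_mul, ← compRingEquiv_apply, ← compRingEquiv_apply,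
      ← map_mul, diagonal_sub_cyclicShift_mul_updateCol, compRingEquiv_apply]
  have hrot := det_comp_of_isLowerTriangular _
    (isLowerTriangular_updateCol_submatrix_finRotate A c)
  rw [det_comp_submatrix_perm, sign_finRotate, Fin.prod_univ_castSucc] at hrot
  simp only [updateCol_submatrix_finRotate_apply_self, Fin.castSucc_ne_last, if_false, if_true,
    det_neg, det_one, Finset.prod_const, Finset.card_univ, Fintype.card_fin] at hrot
  rw [Nat.add_sub_cancel, mul_one, ← pow_mul, mul_comm n k, pow_mul] at hrot
  push_cast at hrot
  have hsign : ((-1 : R) ^ k) ^ n * ((-1) ^ k) ^ n = 1 := by rw [← mul_pow, ← mul_pow]; simp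
  rw [hcleared, ← one_mul (det _), ← hsign, mul_assoc, hrot, ← mul_assoc, hsign, one_mul]

end Det

end Matrix

open Matrix in
theorem cyclic_block_det_general {R : Type*} [CommRing R] (n m : ℕ) (hm : 2 ≤ m)
    (A : Fin m → Matrix (Fin n) (Fin n) R)
    (C : Matrix (Fin m × Fin n) (Fin m × Fin n) R)
    (hC : ∀ i j : Fin m × Fin n, C i j =
      if j.1 = i.1 then A i.1 i.2 j.2
      else if (j.1 : ℕ) = ((i.1 : ℕ) + 1) % m then (-(1 : Matrix (Fin n) (Fin n) R)) i.2 j.2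
      else 0) :
    C.det = ((List.ofFn A).reverse.prod - 1).det := by
  obtain ⟨k, rfl⟩ : ∃ k, m = k + 2 := ⟨m - 2, by omega⟩
  have hsucc (i j : Fin (k + 2)) : (j : ℕ) = ((i : ℕ) + 1) % (k + 2) ↔ j = i + 1 := by
    rw [Fin.ext_iff, Fin.val_add, Fin.val_one]
  have hblocks : C = comp _ _ _ _ R (diagonal A - cyclicShift) := by
    ext i j
    rw [hC, comp_apply, diagonal_sub_cyclicShift_apply]
    simp only [hsucc]
    split_ifs <;> rfl
  rw [hblocks, det_comp_diagonal_sub_cyclicShift]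

/-- Cyclic block determinant: the `m × m` block matrix with diagonal blocks
`A i`, blocks `-I` in position `(i, i+1)` (indices cyclic, so block `(m,1)` is `-I`),
and zero blocks elsewhere, has determinant `det (Aₘ Aₘ₋₁ ⋯ A₁ - I)`. -/
theorem cyclic_block_det {R : Type*} [CommRing R] (n m : ℕ) (hn : 1 ≤ n) (hm : 2 ≤ m)
    (A : Fin m → Matrix (Fin n) (Fin n) R)
    (C : Matrix (Fin m × Fin n) (Fin m × Fin n) R)
    (hC : ∀ i j : Fin m × Fin n, C i j =
      if j.1 = i.1 then A i.1 i.2 j.2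
      else if (j.1 : ℕ) = ((i.1 : ℕ) + 1) % m then (-(1 : Matrix (Fin n) (Fin n) R)) i.2 j.2
      else 0) :
    C.det = ((List.ofFn A).reverse.prod - 1).det :=
  cyclic_block_det_general n m hm A C hC
end

section
/- Let $F$ be a field, $n \ge 1$, and let $B_1, \dots, B_m$ be invertible upper triangular $n \times n$ matrices over $F$ such that for every $i$ the diagonal entries of $B_i$ are $(B_i)_{jj} = \lambda_j$ for fixed $\lambda_1, \dots, \lambda_n \in F^\times$ with $\lambda_1 \lambda_2 \cdots \lambda_n = 1$. Let $\delta_1, \dots, \delta_m \in \{1,-1\}$, set $l = \delta_1 + \cdots + \delta_m$, and set $P = B_1^{\delta_1} \cdots B_m^{\delta_m}$. Then in the polynomial ring $F[Y]$, $\det(Y \cdot P - I_n) = Y^n + \sum_{k=1}^{n-1} \varepsilon_k\, Y^{n-k} + (-1)^n$, where $\varepsilon_k = (-1)^k \sum_{1 \le i_1 < \cdots < i_k \le n} \big(\lambda_1 \cdots \hat{\lambda}_{i_1} \cdots \hat{\lambda}_{i_k} \cdots \lambda_n\big)^l$, and $\hat{\lambda}_{i}$ means that $\lambda_{i}$ is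 omitted from the product. -/
/-!
The upper triangular matrices form a subgroup of `GL n F` on which taking the diagonal is a group
homomorphism to `(Fˣ)ⁿ`. Hence `P` is upper triangular with diagonal `λ₁ˡ, …, λₙˡ`, so
`det (Y • P - 1) = ∏ⱼ (λⱼˡ Y - 1)`. Expanding this product, the coefficient of `Yⁿ⁻ᵏ` is `(-1)ᵏ`
times the sum, over the `k`-sets `s` of omitted indices, of `∏_{j ∉ s} λⱼˡ`; the leading one is
`(λ₁ ⋯ λₙ)ˡ = 1`.
-/

open Polynomial

theorem Finset.prod_zpow_eq_zpow_sum {ι G : Type*} [CommGroup G] (s : Finset ι) (f : ι → ℤ)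
    (a : G) : ∏ i ∈ s, a ^ f i = a ^ ∑ i ∈ s, f i :=
  Finset.cons_induction (by simp)
    (fun _ _ _ _ ↦ by simp [Finset.prod_cons, Finset.sum_cons, zpow_add, *]) s

namespace Matrix

variable {ι R : Type*} [Fintype ι] [LinearOrder ι]

theorem IsUpperTriangular.mul_apply_self [NonUnitalNonAssocSemiring R] {A B : Matrix ι ι R}
    (hA : A.IsUpperTriangular) (hB : B.IsUpperTriangular) (i : ι) :
    (A * B) i i = A i i * B i i := by
  refine Finset.sum_eq_single_of_mem i (Finset.mem_univ i) fun k _ hk => ?_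
  rcases hk.lt_or_gt with h | h
  · simp [hA h]
  · simp [hB h]

variable (ι R) [CommRing R]

def upperTriangularGL : Subgroup (GL ι R) where
  carrier := {g | (g : Matrix ι ι R).IsUpperTriangular}
  one_mem' := blockTriangular_one
  mul_mem' ha hb := ha.mul hb
  inv_mem' {g} hg := by
    have : Invertible (g : Matrix ι ι R) := g.invertible
    simpa [coe_units_inv] using blockTriangular_inv_of_blockTriangular hg

variable {ι R}

theorem upperTriangularGL.mul_apply_self (g h : upperTriangularGL ι R) (i : ι) :
    (((g * h : upperTriangularGL ι R) : GL ι R) : Matrix ι ι R) i i =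
      ((g : GL ι R) : Matrix ι ι R) i i * ((h : GL ι R) : Matrix ι ι R) i i :=
  IsUpperTriangular.mul_apply_self g.2 h.2 i

def upperTriangularGL.diag : upperTriangularGL ι R →* (ι → Rˣ) where
  toFun g i :=
    { val := ((g : GL ι R) : Matrix ι ι R) i i
      inv := (((g⁻¹ : upperTriangularGL ι R) : GL ι R) : Matrix ι ι R) i i
      val_inv := by rw [← upperTriangularGL.mul_apply_self, mul_inv_cancel]; simp
      inv_val := by rw [← upperTriangularGL.mul_apply_self, inv_mul_cancel]; simp }
  map_one' := by ext; simp
  map_mul' g h := by ext; exact upperTriangularGL.mul_apply_self g h _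

@[simp]
theorem upperTriangularGL.val_diag_apply (g : upperTriangularGL ι R) (i : ι) :
    (diag g i : R) = ((g : GL ι R) : Matrix ι ι R) i i := rfl

theorem IsUpperTriangular.det_X_smul_map_C_sub_one {P : Matrix ι ι R}
    (hP : P.IsUpperTriangular) :
    ((X : R[X]) • P.map C - 1).det = ∏ i, (X * C (P i i) - 1) := by
  have hM : ((X : R[X]) • P.map C - 1).IsUpperTriangular := fun i j h => by
    simp [hP h, one_apply_ne (ne_of_gt h : i ≠ j)]
  simp [det_of_isUpperTriangular hM]

end Matrix

namespace Polynomial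

open Finset

variable {ι R : Type*} [Fintype ι] [DecidableEq ι] [CommRing R]

theorem prod_X_mul_C_sub_one (a : ι → R) :
    ∏ j, (X * C (a j) - 1) = ∑ k ∈ range (Fintype.card ι + 1),
      C ((-1) ^ k * ∑ s ∈ powersetCard k univ, ∏ j ∈ sᶜ, a j) * X ^ (Fintype.card ι - k) := by
  calc ∏ j, (X * C (a j) - 1) = ∏ j, (-1 + X * C (a j)) := by simp only [sub_eq_neg_add]
    _ = ∑ s ∈ univ.powerset, C ((-1) ^ #s * ∏ j ∈ sᶜ, a j) * X ^ (Fintype.card ι - #s) := by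
      rw [prod_add]
      refine sum_congr rfl fun s _ => ?_
      rw [← compl_eq_univ_sdiff, prod_mul_distrib, prod_const, prod_const, card_compl, ← map_prod]
      simp only [map_mul, map_pow, map_neg, map_one]
      ring
    _ = _ := by
      rw [sum_powerset, card_univ]
      refine sum_congr rfl fun k _ => ?_
      rw [mul_sum, map_sum, sum_mul]
      refine sum_congr rfl fun s hs => ?_
      rw [(mem_powersetCard.1 hs).2]

theorem prod_X_mul_C_sub_one_eq_add_sum_Ico_add (hι : 0 < Fintype.card ι) (a : ι → R) :
    ∏ j, (X * C (a j) - 1) = C (∏ j, a j) * X ^ Fintype.card ι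
      + ∑ k ∈ Ico 1 (Fintype.card ι),
          C ((-1) ^ k * ∑ s ∈ powersetCard k univ, ∏ j ∈ sᶜ, a j) * X ^ (Fintype.card ι - k)
      + (-1) ^ Fintype.card ι := by
  rw [prod_X_mul_C_sub_one, sum_range_succ, sum_range_eq_add_Ico _ hι, ← card_univ,
    powersetCard_zero, powersetCard_self]
  simp

end Polynomial

theorem det_X_smul_prod_upper_triangular_general {F : Type*} [Field F] (n m : ℕ) (hn : 1 ≤ n)
    (lam : Fin n → Fˣ) (hlam : ∏ j, lam j = 1) (B : Fin m → GL (Fin n) F)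
    (htri : ∀ i, ((B i : Matrix (Fin n) (Fin n) F)).BlockTriangular id)
    (hdiag : ∀ i j, (B i : Matrix (Fin n) (Fin n) F) j j = (lam j : F))
    (δ : Fin m → ℤ) :
    ((Polynomial.X : F[X]) •
        ((List.ofFn fun i => B i ^ δ i).prod : Matrix (Fin n) (Fin n) F).map Polynomial.C
      - 1).det =
      (Polynomial.X : F[X]) ^ n
        + ∑ k ∈ Finset.Ico 1 n,
            Polynomial.C ((-1 : F) ^ k *
              ∑ s ∈ Finset.powersetCard k (Finset.univ : Finset (Fin n)),
                (((∏ j ∈ sᶜ, lam j) ^ (∑ i, δ i) : Fˣ) : F))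
          * (Polynomial.X : F[X]) ^ (n - k)
        + (-1) ^ n := by
  let g : Matrix.upperTriangularGL (Fin n) F := (List.ofFn fun i => ⟨B i, htri i⟩ ^ δ i).prod
  have hg_coe : ((g : GL (Fin n) F) : Matrix (Fin n) (Fin n) F) =
      ((List.ofFn fun i => B i ^ δ i).prod : Matrix (Fin n) (Fin n) F) := by
    simp [g, List.map_ofFn, Function.comp_def]
  have hdiag_g : Matrix.upperTriangularGL.diag g = lam ^ ∑ i, δ i := by
    have hB : ∀ i, Matrix.upperTriangularGL.diag ⟨B i, htri i⟩ = lam :=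
      fun i => funext fun j => Units.ext (hdiag i j)
    simp [g, map_list_prod, List.map_ofFn, Function.comp_def, hB, List.prod_ofFn,
      Finset.prod_zpow_eq_zpow_sum]
  have hprod : ∀ t : Finset (Fin n),
      ∏ j ∈ t, ((g : GL (Fin n) F) : Matrix (Fin n) (Fin n) F) j j =
        (((∏ j ∈ t, lam j) ^ (∑ i, δ i) : Fˣ) : F) := fun t => by
    simp [← Matrix.upperTriangularGL.val_diag_apply, hdiag_g, Finset.prod_zpow]
  rw [← hg_coe, g.2.det_X_smul_map_C_sub_one,
    Polynomial.prod_X_mul_C_sub_one_eq_add_sum_Ico_add (by rwa [Fintype.card_fin]),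
    Fintype.card_fin]
  simp only [hprod, hlam, one_zpow, Units.val_one, map_one, one_mul]

/-- Let `B₁, …, Bₘ` be invertible upper triangular `n × n` matrices over a field with
common diagonal entries `λ₁, …, λₙ` satisfying `λ₁ ⋯ λₙ = 1`, let `δᵢ ∈ {1,-1}`,
`l = δ₁ + ⋯ + δₘ` and `P = B₁^{δ₁} ⋯ Bₘ^{δₘ}`. Then in `F[Y]`,
`det (Y·P - Iₙ) = Yⁿ + ∑_{k=1}^{n-1} εₖ Y^{n-k} + (-1)ⁿ` where
`εₖ = (-1)ᵏ ∑_{i₁<⋯<iₖ} (λ₁ ⋯ λ̂_{i₁} ⋯ λ̂_{iₖ} ⋯ λₙ)^l`. -/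
theorem det_X_smul_prod_upper_triangular {F : Type*} [Field F] (n m : ℕ) (hn : 1 ≤ n)
    (lam : Fin n → Fˣ) (hlam : ∏ j, lam j = 1) (B : Fin m → GL (Fin n) F)
    (htri : ∀ i, ((B i : Matrix (Fin n) (Fin n) F)).BlockTriangular id)
    (hdiag : ∀ i j, (B i : Matrix (Fin n) (Fin n) F) j j = (lam j : F))
    (δ : Fin m → ℤ) (hδ : ∀ i, δ i = 1 ∨ δ i = -1) :
    ((Polynomial.X : F[X]) •
        ((List.ofFn fun i => B i ^ δ i).prod : Matrix (Fin n) (Fin n) F).map Polynomial.C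
      - 1).det =
      (Polynomial.X : F[X]) ^ n
        + ∑ k ∈ Finset.Ico 1 n,
            Polynomial.C ((-1 : F) ^ k *
              ∑ s ∈ Finset.powersetCard k (Finset.univ : Finset (Fin n)),
                (((∏ j ∈ sᶜ, lam j) ^ (∑ i, δ i) : Fˣ) : F))
          * (Polynomial.X : F[X]) ^ (n - k)
        + (-1) ^ n :=
  det_X_smul_prod_upper_triangular_general n m hn lam hlam B htri hdiag δ
end
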